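/- arXiv:0704.2522 — 5 statements merged into one kernel-verified Lean document; each statement's English description precedes it below -/
import Mathlib

section
/- Let k be a commutative ring, M a k-module equipped with a k-bilinear associative multiplication ⋆, and M = ⊕_{n∈ℕ} M_n an internal direct sum decomposition of M as a k-module (with projections π_n). Let T : M → M be a k-linear map that is multiplicative for ⋆ (T(x ⋆ y) = T(x) ⋆ T(y)), and define the shifted law ⋆̄ as the k-bilinear map given by a ⋆̄ b := Σ_{α} π_α(a) ⋆ T^α(b), where T^α is the α-th iterate of T (so a ⋆̄ b = a ⋆ T^α(b) when a ∈ M_α). If the shifted law is graded for the decomposition, i.e. M_m ⋆̄ M_n ⊆ M_{m+n} for all m, n ∈ ℕ, then ⋆̄ is associative. -/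
/-!
On homogeneous `a ∈ ℳ α` the shifted law is `a ⋆̄ b = a ⋆ T^α b`. For `a ∈ ℳ α`, `b ∈ ℳ β`
gradedness puts `a ⋆̄ b` in `ℳ (α + β)`, so both `(a ⋆̄ b) ⋆̄ c` and `a ⋆̄ (b ⋆̄ c)` equal
`a ⋆ T^α b ⋆ T^(α+β) c`, because `T^α` is multiplicative. Bilinearity reduces the general case
to homogeneous `a` and `b`.
-/

open DirectSum

section

variable {ι k M : Type*} [DecidableEq ι] [CommRing k] [AddCommGroup M] [Module k M]
  (ℳ : ι → Submodule k M) [Decomposition ℳ]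

theorem LinearMap.assoc_of_mem_of_mem (f : M →ₗ[k] M →ₗ[k] M)
    (h : ∀ i j, ∀ a ∈ ℳ i, ∀ b ∈ ℳ j, ∀ c, f (f a b) c = f a (f b c)) (a b c : M) :
    f (f a b) c = f a (f b c) := by
  induction a using Decomposition.inductionOn ℳ with
  | zero => simp
  | add x y hx hy => simp only [map_add, LinearMap.add_apply, hx, hy]
  | @homogeneous i x =>
    induction b using Decomposition.inductionOn ℳ with
    | zero => simp
    | add y z hy hz => simp only [map_add, LinearMap.add_apply, hy, hz]
    | @homogeneous j y => exact h i j x x.2 y y.2 c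

end

theorem LinearMap.pow_apply_of_map_mul {k M : Type*} [CommSemiring k] [AddCommMonoid M]
    [Module k M] {mul : M →ₗ[k] M →ₗ[k] M} {T : M →ₗ[k] M}
    (hT : ∀ x y, T (mul x y) = mul (T x) (T y))
    (n : ℕ) (x y : M) : (T ^ n) (mul x y) = mul ((T ^ n) x) ((T ^ n) y) := by
  induction n with
  | zero => rfl
  | succ n ih => simp only [pow_succ', Module.End.mul_apply, ih, hT]

section

variable {k M : Type*} [CommRing k] [AddCommGroup M] [Module k M]
  (mul : M →ₗ[k] M →ₗ[k] M) (ℳ : ℕ → Submodule k M) [Decomposition ℳ] (T : M →ₗ[k] M)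

noncomputable def shiftedMul : M →ₗ[k] M →ₗ[k] M :=
  toModule k ℕ _ (fun α => (mul.compl₂ (T ^ α)).comp (ℳ α).subtype) ∘ₗ
    (decomposeLinearEquiv ℳ).toLinearMap

variable {mul ℳ T}

theorem shiftedMul_apply_of_mem {α : ℕ} {a : M} (ha : a ∈ ℳ α) (b : M) :
    shiftedMul mul ℳ T a b = mul a ((T ^ α) b) := by
  rw [shiftedMul, LinearMap.comp_apply, LinearEquiv.coe_coe, decomposeLinearEquiv_apply,
    decompose_of_mem ℳ ha, ← lof_eq_of k, toModule_lof]
  rfl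

theorem shiftedMul_apply (a b : M) :
    shiftedMul mul ℳ T a b = DFinsupp.sumAddHom
        (fun α => ((mul.flip ((T ^ α) b)).comp (ℳ α).subtype).toAddMonoidHom)
        (decompose ℳ a) := by
  induction a using Decomposition.inductionOn ℳ with
  | zero => simp
  | add x y hx hy => simp only [map_add, LinearMap.add_apply, decompose_add, hx, hy]
  | @homogeneous α x =>
    rw [shiftedMul_apply_of_mem x.2, decompose_coe, DirectSum.of, DFinsupp.singleAddHom_apply,
      DFinsupp.sumAddHom_single]
    rfl

theorem shiftedMul_assoc (hassoc : ∀ a b c, mul (mul a b) c = mul a (mul b c))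
    (hT : ∀ x y, T (mul x y) = mul (T x) (T y))
    (hgraded : ∀ m n, ∀ a ∈ ℳ m, ∀ b ∈ ℳ n, shiftedMul mul ℳ T a b ∈ ℳ (m + n)) (a b c : M) :
    shiftedMul mul ℳ T (shiftedMul mul ℳ T a b) c =
      shiftedMul mul ℳ T a (shiftedMul mul ℳ T b c) :=
  (shiftedMul mul ℳ T).assoc_of_mem_of_mem ℳ (fun m n a ha b hb c => by
    rw [shiftedMul_apply_of_mem (hgraded m n a ha b hb), shiftedMul_apply_of_mem ha,
      shiftedMul_apply_of_mem ha, shiftedMul_apply_of_mem hb, LinearMap.pow_apply_of_map_mul hT,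
      hassoc, pow_add, Module.End.mul_apply]) a b c

end

/-- ** Statement 0 ** (shifting lemma): let `M` be a `k`-module with a bilinear associative
multiplication `mul`, an internal direct sum decomposition `M = ⨁ₙ ℳ n`, and a linear
multiplicative endomorphism `T`.  Define the shifted law
`a ⋆̄ b = Σ_α π_α a ⋆ T^α b` (where `π_α` is the projection onto `ℳ α`).
If the shifted law is graded for the decomposition, then it is associative. -/
theorem shifted_law_assoc (k M : Type*) [CommRing k] [AddCommGroup M] [Module k M]
    (mul : M →ₗ[k] M →ₗ[k] M)
    (hassoc : ∀ a b c : M, mul (mul a b) c = mul a (mul b c))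
    (ℳ : ℕ → Submodule k M) [DirectSum.Decomposition ℳ]
    (T : M →ₗ[k] M) (hT : ∀ x y : M, T (mul x y) = mul (T x) (T y))
    (smulbar : M → M → M)
    (hdef : ∀ a b : M, smulbar a b =
      DFinsupp.sumAddHom
        (fun α => ((mul.flip ((T ^ α) b)).comp (ℳ α).subtype).toAddMonoidHom)
        (DirectSum.decompose ℳ a))
    (hgraded : ∀ m n : ℕ, ∀ a ∈ ℳ m, ∀ b ∈ ℳ n, smulbar a b ∈ ℳ (m + n)) :
    ∀ a b c : M, smulbar (smulbar a b) c = smulbar a (smulbar b c) := by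
  obtain rfl : smulbar = fun a b => shiftedMul mul ℳ T a b :=
    funext₂ fun a b => (hdef a b).trans (shiftedMul_apply a b).symm
  exact shiftedMul_assoc hassoc hT hgraded
end

section
/- The shifted concatenation ∗̄ is associative on L with the empty list [] as two-sided unit, so (L, ∗̄, []) is a monoid; moreover this monoid is free: calling l ∈ L ∗̄-irreducible when l ≠ [] and l admits no factorization l = u ∗̄ v with u and v both nonempty, every nonempty l ∈ L can be written in exactly one way as l = l_1 ∗̄ l_2 ∗̄ ⋯ ∗̄ l_r with every l_i ∗̄-irreducible. -/
open scoped TensorProduct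

/-- A monomial: a nonzero finitely supported multi-index with support contained in `{1,2,…}`. -/
def Mon : Type := {m : ℕ →₀ ℕ // m ≠ 0 ∧ m 0 = 0}

namespace Mon

/-- Product of monomials: pointwise addition of multi-indices. -/
noncomputable instance : Mul Mon :=
  ⟨fun a b =>
    ⟨a.1 + b.1, by
      constructor
      · intro h
        exact a.2.1 ((add_eq_zero.mp h).1)
      · simp [Finsupp.add_apply, a.2.2, b.2.2]⟩⟩

/-- The total degree (weight) of a monomial. -/
def w (m : Mon) : ℕ := m.1.sum fun _ v => v

/-- The set of variable indices occurring in a list of monomials. -/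
def IndAlph (l : List Mon) : Finset ℕ := (l.map fun m => m.1.support).foldr (· ∪ ·) ∅

/-- The maximal variable index occurring in a list of monomials (`0` for the empty list). -/
def maxInd (l : List Mon) : ℕ := (IndAlph l).sup id

/-- The embedding `i ↦ i + p` of `ℕ` into itself. -/
def addEmb (p : ℕ) : ℕ ↪ ℕ := ⟨fun i => i + p, fun a b h => by simpa using h⟩

/-- The shift `T_p` of a monomial: translate the support by `p`. -/
noncomputable def Tmon (p : ℕ) (m : Mon) : Mon :=
  ⟨m.1.embDomain (addEmb p), by
    refine ⟨fun h => m.2.1 (Finsupp.embDomain_eq_zero.mp h), ?_⟩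
    by_cases hp : p = 0
    · subst hp
      have h0 : (Finsupp.embDomain (addEmb 0) m.1) ((addEmb 0) 0) = m.1 0 :=
        Finsupp.embDomain_apply_self _ _ _
      simpa [addEmb] using h0.trans m.2.2
    · apply Finsupp.embDomain_notin_range
      rintro ⟨i, hi⟩
      simp only [addEmb, Function.Embedding.coeFn_mk] at hi
      change i + p = 0 at hi
      omega⟩

/-- Shifted concatenation of lists of monomials. -/
noncomputable def sconc (l₁ l₂ : List Mon) : List Mon := l₁ ++ l₂.map (Tmon (maxInd l₁))

/-- A list of monomials is compact when its alphabet has no holes: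
`IndAlph l = {1,…,card (IndAlph l)}`. -/
def Compact (l : List Mon) : Prop := IndAlph l = Finset.Icc 1 (IndAlph l).card

/-- The re-indexing function of a list `l` : on `IndAlph l` it is the unique strictly
increasing bijection onto `{1,…,card (IndAlph l)}` (extended injectively elsewhere). -/
noncomputable def phi (l : List Mon) (i : ℕ) : ℕ :=
  if h : i ∈ IndAlph l then
    (((IndAlph l).orderIsoOfFin rfl).symm ⟨i, h⟩ : Fin (IndAlph l).card) + 1
  else i + (IndAlph l).card + 1

lemma phi_pos (l : List Mon) (i : ℕ) : 1 ≤ phi l i := by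
  unfold phi; split_ifs <;> omega

lemma phi_inj (l : List Mon) : Function.Injective (phi l) := by
  intro a b hab
  unfold phi at hab
  split_ifs at hab with ha hb hb
  · have h1 : (((IndAlph l).orderIsoOfFin rfl).symm ⟨a, ha⟩) =
        (((IndAlph l).orderIsoOfFin rfl).symm ⟨b, hb⟩) := Fin.ext (by omega)
    have h2 := congrArg ((IndAlph l).orderIsoOfFin rfl) h1
    rw [OrderIso.apply_symm_apply, OrderIso.apply_symm_apply] at h2
    exact congrArg Subtype.val h2
  · have := (((IndAlph l).orderIsoOfFin rfl).symm ⟨a, ha⟩).isLt; omega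
  · have := (((IndAlph l).orderIsoOfFin rfl).symm ⟨b, hb⟩).isLt; omega
  · omega

/-- Action of the compacting operator of `l` on a single monomial. -/
noncomputable def cptMon (l : List Mon) (m : Mon) : Mon :=
  ⟨m.1.mapDomain (phi l), by
    constructor
    · intro h
      apply m.2.1
      exact Finsupp.mapDomain_injective (phi_inj l) (by simpa using h)
    · apply Finsupp.mapDomain_notin_range
      rintro ⟨i, hi⟩
      have := phi_pos l i
      omega⟩

/-- The compacting operator on lists of monomials. -/
noncomputable def cpt (l : List Mon) : List Mon := l.map (cptMon l)

/-- `sub l I` is the sublist of `l` consisting of the entries whose (1-based) position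
belongs to `I`. -/
def sub (l : List Mon) (I : Finset ℕ) : List Mon :=
  (List.range l.length).filterMap fun j => if j + 1 ∈ I then l[j]? else none

/-- `∗̄`-irreducible lists: nonempty and with no factorization into two nonempty lists. -/
def SIrred (l : List Mon) : Prop :=
  l ≠ [] ∧ ∀ u v : List Mon, l = sconc u v → u = [] ∨ v = []

end Mon

/-!
The shift `T_p` only translates indices, so `maxInd` is additive along `∗̄`, and associativity
follows from `T_p ∘ T_q = T_{p+q}`. For freeness: `x ∗̄ r` has `x` as a prefix and is injective in
`r`. If irreducible `x, x'` with `|x| ≤ |x'|` satisfy `x ∗̄ r = x' ∗̄ r'`, then `x' = x ∗̄ r₀` for a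
prefix `r₀` of `r`, so `r₀ = []` and `x = x'`; cancelling and inducting on the number of factors
gives uniqueness. Existence is induction on the length, which is additive along `∗̄`.
-/

namespace Mon

lemma Tmon_val (p : ℕ) (m : Mon) : (Tmon p m).1 = m.1.embDomain (addEmb p) := rfl

lemma Tmon_zero (m : Mon) : Tmon 0 m = m := by
  have : addEmb 0 = Function.Embedding.refl ℕ := by ext i; exact Nat.add_zero i
  exact Subtype.ext (by rw [Tmon_val, this, Finsupp.embDomain_refl, id])

lemma Tmon_Tmon (p q : ℕ) (m : Mon) : Tmon p (Tmon q m) = Tmon (q + p) m := by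
  have : addEmb (q + p) = (addEmb q).trans (addEmb p) := by
    ext i; exact (Nat.add_assoc i q p).symm
  exact Subtype.ext (by rw [Tmon_val, Tmon_val, Tmon_val, this, Finsupp.embDomain_trans_apply])

lemma Tmon_injective (p : ℕ) : Function.Injective (Tmon p) := fun _ _ h =>
  Subtype.ext (Finsupp.embDomain_injective (addEmb p) (congrArg Subtype.val h))

lemma IndAlph_cons (m : Mon) (l : List Mon) : IndAlph (m :: l) = m.1.support ∪ IndAlph l := rfl

lemma IndAlph_append (l₁ l₂ : List Mon) : IndAlph (l₁ ++ l₂) = IndAlph l₁ ∪ IndAlph l₂ := by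
  induction l₁ with
  | nil => exact (Finset.empty_union _).symm
  | cons m t ih => rw [List.cons_append, IndAlph_cons, IndAlph_cons, ih, Finset.union_assoc]

lemma IndAlph_map_Tmon (p : ℕ) (l : List Mon) :
    IndAlph (l.map (Tmon p)) = (IndAlph l).map (addEmb p) := by
  induction l with
  | nil => rfl
  | cons m t ih =>
    rw [List.map_cons, IndAlph_cons, IndAlph_cons, ih, Finset.map_union, Tmon_val,
      Finsupp.support_embDomain]

lemma IndAlph_nonempty {l : List Mon} (h : l ≠ []) : (IndAlph l).Nonempty := by
  obtain ⟨m, t, rfl⟩ := List.exists_cons_of_ne_nil h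
  exact (Finsupp.support_nonempty_iff.mpr m.2.1).mono Finset.subset_union_left

lemma maxInd_nil : maxInd [] = 0 := rfl

lemma maxInd_map_Tmon (p : ℕ) {l : List Mon} (h : l ≠ []) :
    maxInd (l.map (Tmon p)) = maxInd l + p := by
  rw [maxInd, maxInd, IndAlph_map_Tmon, Finset.sup_map,
    Finset.apply_sup_eq_sup_comp_of_nonempty (g := (· + p)) add_left_mono (IndAlph_nonempty h)]
  rfl

lemma sconc_nil (a : List Mon) : sconc a [] = a := List.append_nil a

lemma nil_sconc (a : List Mon) : sconc [] a = a := by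
  rw [sconc, maxInd_nil, List.nil_append, funext Tmon_zero, List.map_id']

lemma length_sconc (a b : List Mon) : (sconc a b).length = a.length + b.length := by
  rw [sconc, List.length_append, List.length_map]

lemma maxInd_sconc (a b : List Mon) : maxInd (sconc a b) = maxInd a + maxInd b := by
  rcases eq_or_ne b [] with rfl | hb
  · rw [sconc_nil, maxInd_nil, Nat.add_zero]
  · have hle : maxInd a ≤ maxInd b + maxInd a := Nat.le_add_left _ _
    rw [sconc, maxInd, IndAlph_append, Finset.sup_union, ← maxInd, ← maxInd, maxInd_map_Tmon _ hb,
      sup_eq_right.mpr hle, Nat.add_comm]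

lemma sconc_assoc (a b c : List Mon) : sconc (sconc a b) c = sconc a (sconc b c) := by
  have hmax := maxInd_sconc a b
  unfold sconc at hmax ⊢
  rw [hmax, List.map_append, List.map_map, List.append_assoc]
  congr 3
  funext m
  rw [Function.comp_apply, Tmon_Tmon, Nat.add_comm]

lemma sconc_right_injective (a : List Mon) : Function.Injective (sconc a) := fun _ _ h =>
  (Tmon_injective _).list_map (List.append_cancel_left h)

lemma take_sconc_of_length_le (a b : List Mon) {n : ℕ} (hn : a.length ≤ n) :
    (sconc a b).take n = sconc a (b.take (n - a.length)) := by
  rw [sconc, sconc, List.take_append, List.take_of_length_le hn, List.map_take]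

lemma SIrred.eq_of_sconc_eq_sconc_of_length_le {x x' r r' : List Mon} (hx : x ≠ [])
    (hx' : SIrred x') (h : sconc x r = sconc x' r') (hlen : x.length ≤ x'.length) : x' = x := by
  have hprefix : x' = sconc x (r.take (x'.length - x.length)) := by
    rw [← take_sconc_of_length_le _ _ hlen, h, sconc, List.take_left]
  rcases hx'.2 _ _ hprefix with hnil | hnil
  · exact absurd hnil hx
  · rw [hprefix, hnil, sconc_nil]

lemma SIrred.eq_of_sconc_eq_sconc {x x' r r' : List Mon} (hx : SIrred x) (hx' : SIrred x')
    (h : sconc x r = sconc x' r') : x = x' ∧ r = r' := by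
  obtain rfl : x = x' := by
    rcases le_total x.length x'.length with hlen | hlen
    · exact (hx'.eq_of_sconc_eq_sconc_of_length_le hx.1 h hlen).symm
    · exact hx.eq_of_sconc_eq_sconc_of_length_le hx'.1 h.symm hlen
  exact ⟨rfl, sconc_right_injective x h⟩

lemma foldr_sconc_append (fs gs : List (List Mon)) :
    (fs ++ gs).foldr sconc [] = sconc (fs.foldr sconc []) (gs.foldr sconc []) := by
  induction fs with
  | nil => exact (nil_sconc _).symm
  | cons a t ih => rw [List.cons_append, List.foldr_cons, List.foldr_cons, ih, sconc_assoc]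

lemma foldr_sconc_eq_nil_iff {fs : List (List Mon)} (h : ∀ x ∈ fs, SIrred x) :
    fs.foldr sconc [] = [] ↔ fs = [] := by
  refine ⟨fun hnil => ?_, fun hfs => hfs ▸ rfl⟩
  cases fs with
  | nil => rfl
  | cons a t => exact absurd (List.append_eq_nil_iff.mp hnil).1 (h a List.mem_cons_self).1

theorem exists_SIrred_factorization (l : List Mon) (hl : l ≠ []) :
    ∃ fs : List (List Mon), (∀ x ∈ fs, SIrred x) ∧ fs.foldr sconc [] = l := by
  by_cases hirr : SIrred l
  · exact ⟨[l], by simpa using hirr, sconc_nil l⟩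
  obtain ⟨u, v, rfl, hu, hv⟩ : ∃ u v, l = sconc u v ∧ u ≠ [] ∧ v ≠ [] := by
    simpa [SIrred, hl] using hirr
  have hu_lt : u.length < (sconc u v).length := by
    rw [length_sconc]; exact Nat.lt_add_of_pos_right (List.length_pos_iff.mpr hv)
  have hv_lt : v.length < (sconc u v).length := by
    rw [length_sconc]; exact Nat.lt_add_of_pos_left (List.length_pos_iff.mpr hu)
  obtain ⟨fu, hfu, rfl⟩ := exists_SIrred_factorization u hu
  obtain ⟨fv, hfv, rfl⟩ := exists_SIrred_factorization v hv
  refine ⟨fu ++ fv, fun x hx => ?_, foldr_sconc_append fu fv⟩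
  exact (List.mem_append.mp hx).elim (hfu x) (hfv x)
termination_by l.length

theorem SIrred_factorization_unique {fs gs : List (List Mon)} (hfs : ∀ x ∈ fs, SIrred x)
    (hgs : ∀ x ∈ gs, SIrred x) (h : fs.foldr sconc [] = gs.foldr sconc []) : fs = gs := by
  induction fs generalizing gs with
  | nil => exact ((foldr_sconc_eq_nil_iff hgs).mp h.symm).symm
  | cons x t ih =>
    cases gs with
    | nil => exact (foldr_sconc_eq_nil_iff hfs).mp h
    | cons x' t' =>
      obtain ⟨rfl, hrest⟩ := (hfs x List.mem_cons_self).eq_of_sconc_eq_sconc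
        (hgs x' List.mem_cons_self) h
      rw [ih (fun y hy => hfs y (List.mem_cons_of_mem _ hy))
        (fun y hy => hgs y (List.mem_cons_of_mem _ hy)) hrest]

end Mon

/-- ** Statement 2 **: shifted concatenation makes the set of lists of monomials a monoid
with unit the empty list, and this monoid is free: every nonempty list factors uniquely
into `*`-irreducible lists. -/
theorem sconc_monoid_free :
    (∀ a b c : List Mon, Mon.sconc (Mon.sconc a b) c = Mon.sconc a (Mon.sconc b c)) ∧
    (∀ a : List Mon, Mon.sconc [] a = a ∧ Mon.sconc a [] = a) ∧
    (∀ l : List Mon, l ≠ [] →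
      ∃! fs : List (List Mon),
        (∀ x ∈ fs, Mon.SIrred x) ∧ fs.foldr Mon.sconc [] = l) := by
  refine ⟨Mon.sconc_assoc, fun a => ⟨Mon.nil_sconc a, Mon.sconc_nil a⟩, fun l hl => ?_⟩
  obtain ⟨fs, hfs, rfl⟩ := Mon.exists_SIrred_factorization l hl
  exact ⟨fs, ⟨hfs, rfl⟩, fun gs ⟨hgs, h⟩ => Mon.SIrred_factorization_unique hgs hfs h⟩
end

section
/- Let A be a bialgebra over a commutative ring R with comultiplication Δ : A → A ⊗_R A, let P = {x ∈ A : Δ(x) = x ⊗ 1 + 1 ⊗ x} be the set of primitive elements, and let S be the R-subalgebra of A generated by P. Then S is a subcoalgebra of A in the sense that Δ(S) is contained in the R-submodule of A ⊗_R A spanned by the elements s ⊗ s' with s, s' ∈ S. -/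
/-! The span of the pure tensors `s ⊗ s'` with `s, s' ∈ S` is the image of the algebra map
`S ⊗ S → A ⊗ A`, hence a subalgebra. Its preimage under the algebra map `Δ` is then a subalgebra
of `A`, and it contains every primitive `x` because `Δ x = x ⊗ 1 + 1 ⊗ x`. -/

open scoped TensorProduct

namespace Subalgebra

variable {R A B : Type*} [CommSemiring R] [Semiring A] [Semiring B] [Algebra R A] [Algebra R B]

theorem span_tmul_eq_toSubmodule_range_map (S : Subalgebra R A) (T : Subalgebra R B) :
    Submodule.span R {t : A ⊗[R] B | ∃ s ∈ S, ∃ s' ∈ T, t = s ⊗ₜ[R] s'} =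
      Subalgebra.toSubmodule (Algebra.TensorProduct.map S.val T.val).range := by
  change _ = LinearMap.range (TensorProduct.map S.val.toLinearMap T.val.toLinearMap)
  rw [TensorProduct.range_map_eq_span_tmul]
  congr 1
  ext t
  constructor
  · rintro ⟨s, hs, s', hs', rfl⟩
    exact ⟨⟨s, hs⟩, ⟨s', hs'⟩, rfl⟩
  · rintro ⟨s, s', rfl⟩
    exact ⟨s, s.2, s', s'.2, rfl⟩

theorem _root_.AlgHom.apply_mem_span_tmul_of_mem_adjoin {C : Type*} [Semiring C] [Algebra R C]
    (f : C →ₐ[R] A ⊗[R] B) (S : Subalgebra R A) (T : Subalgebra R B) {s : Set C}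
    (hs : ∀ c ∈ s, f c ∈ Submodule.span R {t : A ⊗[R] B | ∃ a ∈ S, ∃ b ∈ T, t = a ⊗ₜ[R] b}) :
    ∀ c ∈ Algebra.adjoin R s,
      f c ∈ Submodule.span R {t : A ⊗[R] B | ∃ a ∈ S, ∃ b ∈ T, t = a ⊗ₜ[R] b} := by
  simp only [span_tmul_eq_toSubmodule_range_map, Subalgebra.mem_toSubmodule] at hs ⊢
  have hle : Algebra.adjoin R s ≤ (Algebra.TensorProduct.map S.val T.val).range.comap f :=
    Algebra.adjoin_le hs
  exact fun c hc => hle hc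

end Subalgebra

/-- ** Statement 14 **: in a bialgebra `A` over a commutative ring `R`, the subalgebra `S`
generated by the set of primitive elements is a subcoalgebra: the comultiplication maps `S`
into the `R`-span of the pure tensors `s ⊗ s'` with `s, s' ∈ S`. -/
theorem adjoin_primitives_subcoalgebra (R A : Type*) [CommRing R] [Ring A]
    [Bialgebra R A] :
    ∀ x ∈ Algebra.adjoin R {a : A | Coalgebra.comul (R := R) a = a ⊗ₜ[R] 1 + 1 ⊗ₜ[R] a},
      Coalgebra.comul (R := R) x ∈
        Submodule.span R {t : A ⊗[R] A |
          ∃ s ∈ Algebra.adjoin R {a : A | Coalgebra.comul (R := R) a = a ⊗ₜ[R] 1 + 1 ⊗ₜ[R] a},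
          ∃ s' ∈ Algebra.adjoin R {a : A | Coalgebra.comul (R := R) a = a ⊗ₜ[R] 1 + 1 ⊗ₜ[R] a},
            t = s ⊗ₜ[R] s'} := by
  set S := Algebra.adjoin R {a : A | Coalgebra.comul (R := R) a = a ⊗ₜ[R] 1 + 1 ⊗ₜ[R] a}
  refine (Bialgebra.comulAlgHom R A).apply_mem_span_tmul_of_mem_adjoin S S ?_
  intro a (ha : Coalgebra.comul a = a ⊗ₜ[R] 1 + 1 ⊗ₜ[R] a)
  rw [Bialgebra.comulAlgHom_apply, ha]
  exact add_mem (Submodule.subset_span ⟨a, Algebra.subset_adjoin ha, 1, S.one_mem, rfl⟩)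
    (Submodule.subset_span ⟨1, S.one_mem, a, Algebra.subset_adjoin ha, rfl⟩)
end

section
/- The twisted law ↑ is associative on k⟨A*⟩ ((x ↑ y) ↑ z = x ↑ (y ↑ z) for all x, y, z ∈ k⟨A*⟩), the empty list [] is a two-sided unit for ↑, and ↑ is graded for the weight: for all lists u, v ∈ A*, u ↑ v is a k-linear combination of lists of weight w(u) + w(v). -/
/-- Weight of a list: sum of the weights of its entries. -/
def wl {A : Type*} (w : A → ℕ) (l : List A) : ℕ := (l.map w).sum

/-- The twisted law `↑` on basis lists, with crossing parameter `qc` and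
superposition parameter `qs`. -/
noncomputable def tw {A : Type*} [Mul A] (k : Type*) [CommRing k] (qc qs : k) (w : A → ℕ) :
    List A → List A → (List A →₀ k)
  | u, [] => Finsupp.single u 1
  | [], b :: v => Finsupp.single (b :: v) 1
  | a :: u, b :: v =>
      Finsupp.mapDomain (a :: ·) (tw k qc qs w u (b :: v))
        + qc ^ (wl w (a :: u) * w b) • Finsupp.mapDomain (b :: ·) (tw k qc qs w (a :: u) v)
        + (qc ^ (wl w u * w b) * qs ^ (w a * w b)) •
            Finsupp.mapDomain ((a * b) :: ·) (tw k qc qs w u v)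
  termination_by u v => u.length + v.length
  decreasing_by all_goals simp <;> omega

/-- The bilinear extension of the twisted law `↑` to the free module on lists. -/
noncomputable def twL {A : Type*} [Mul A] (k : Type*) [CommRing k] (qc qs : k) (w : A → ℕ) :
    (List A →₀ k) →ₗ[k] (List A →₀ k) →ₗ[k] (List A →₀ k) :=
  Finsupp.lift _ k _ fun u => Finsupp.lift _ k _ fun v => tw k qc qs w u v

/-!
Associativity is checked on basis lists, by induction on the total length of the three lists.
The defining recursion for `(a :: x) ↑ (c :: y)` extends by linearity to every `x` homogeneous of
a fixed weight `n`, with `n` in place of `w x` in the exponents; since `w (a * b) = w a + w b`,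
all partial products are homogeneous. Expanding both sides of
`(a::u ↑ b::v) ↑ c::s = a::u ↑ (b::v ↑ c::s)` with it, the terms match by the induction
hypothesis, except that on the left the three terms beginning with `c` must first be recombined
into `c :: ((a::u ↑ b::v) ↑ s)`.
-/

section TwistedLaw

variable {A : Type*} {k : Type*} [CommRing k]

theorem wl_cons (w : A → ℕ) (a : A) (l : List A) : wl w (a :: l) = w a + wl w l := by
  simp [wl]

variable (k) in
def homogeneous (w : A → ℕ) (n : ℕ) : Submodule k (List A →₀ k) :=
  Finsupp.supported k k {l | wl w l = n}

theorem single_mem_homogeneous (w : A → ℕ) (l : List A) (c : k) :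
    Finsupp.single l c ∈ homogeneous k w (wl w l) :=
  Finsupp.single_mem_supported k c rfl

theorem mapDomain_cons_mem_homogeneous {w : A → ℕ} {n : ℕ} {x : List A →₀ k} (a : A)
    (hx : x ∈ homogeneous k w n) : Finsupp.mapDomain (a :: ·) x ∈ homogeneous k w (w a + n) :=
  Finsupp.supported_comap_lmapDomain k k _ _ <|
    Finsupp.supported_mono (fun l (hl : wl w l = n) => by simp [wl_cons, hl]) hx

section Mul

variable [Mul A] (qc qs : k) (w : A → ℕ)

theorem tw_nil_left (v : List A) : tw k qc qs w [] v = Finsupp.single v 1 := by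
  cases v <;> rw [tw]

theorem twL_single (u v : List A) (b c : k) :
    twL k qc qs w (Finsupp.single u b) (Finsupp.single v c) = (b * c) • tw k qc qs w u v := by
  simp [twL, mul_smul]

theorem twL_single_nil_left (x : List A →₀ k) : twL k qc qs w (Finsupp.single [] 1) x = x := by
  induction x using Finsupp.induction_linear with
  | zero => simp
  | add x y hx hy => simp only [map_add, hx, hy]
  | single v b => simp [twL_single, tw_nil_left]

theorem twL_single_nil_right (x : List A →₀ k) : twL k qc qs w x (Finsupp.single [] 1) = x := by
  induction x using Finsupp.induction_linear with
  | zero => simp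
  | add x y hx hy => simp only [map_add, LinearMap.add_apply, hx, hy]
  | single u b => simp [twL_single, tw.eq_1]

theorem tw_mem_homogeneous (hw : ∀ a b : A, w (a * b) = w a + w b) (u v : List A) :
    tw k qc qs w u v ∈ homogeneous k w (wl w u + wl w v) := by
  induction u, v using tw.induct with
  | case1 u => simpa [tw.eq_1, wl] using single_mem_homogeneous w u (1 : k)
  | case2 b v => simpa [tw_nil_left, wl] using single_mem_homogeneous w (b :: v) (1 : k)
  | case3 a u b v h₁ h₂ h₃ =>
    rw [tw.eq_3]
    refine add_mem (add_mem ?_ (Submodule.smul_mem _ _ ?_)) (Submodule.smul_mem _ _ ?_)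
    · convert mapDomain_cons_mem_homogeneous a h₁ using 2
      simp only [wl_cons]; ring
    · convert mapDomain_cons_mem_homogeneous b h₂ using 2
      simp only [wl_cons]; ring
    · convert mapDomain_cons_mem_homogeneous (a * b) h₃ using 2
      simp only [wl_cons, hw]; ring

theorem twL_mapDomain_cons {n : ℕ} {x : List A →₀ k} (hx : x ∈ homogeneous k w n) (a c : A)
    (y : List A →₀ k) :
    twL k qc qs w (Finsupp.mapDomain (a :: ·) x) (Finsupp.mapDomain (c :: ·) y) =
      Finsupp.mapDomain (a :: ·) (twL k qc qs w x (Finsupp.mapDomain (c :: ·) y))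
      + qc ^ ((w a + n) * w c) • Finsupp.mapDomain (c :: ·)
          (twL k qc qs w (Finsupp.mapDomain (a :: ·) x) y)
      + (qc ^ (n * w c) * qs ^ (w a * w c)) • Finsupp.mapDomain ((a * c) :: ·)
          (twL k qc qs w x y) := by
  induction y using Finsupp.induction_linear with
  | zero => simp
  | add y₁ y₂ h₁ h₂ =>
    simp only [Finsupp.mapDomain_add, map_add, h₁, h₂]
    module
  | single s b =>
    rw [homogeneous, Finsupp.supported_eq_span_single] at hx
    induction hx using Submodule.span_induction with
    | mem _ ht =>
      obtain ⟨t, ht : wl w t = n, rfl⟩ := ht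
      simp only [Finsupp.mapDomain_single, twL_single, tw.eq_3, wl_cons, ht,
        Finsupp.mapDomain_smul]
      module
    | zero => simp
    | add x₁ x₂ _ _ h₁ h₂ =>
      simp only [Finsupp.mapDomain_add, map_add, LinearMap.add_apply, h₁, h₂]
      module
    | smul r x _ h =>
      simp only [Finsupp.mapDomain_smul, map_smul, LinearMap.smul_apply, h]
      module

end Mul

section Semigroup

variable [Semigroup A] (qc qs : k) (w : A → ℕ)

theorem twL_tw_single (hw : ∀ a b : A, w (a * b) = w a + w b) :
    ∀ u v s : List A, twL k qc qs w (tw k qc qs w u v) (Finsupp.single s 1) =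
      twL k qc qs w (Finsupp.single u 1) (tw k qc qs w v s)
  | u, v, [] => by rw [twL_single_nil_right, tw.eq_1, twL_single, one_mul, one_smul]
  | u, [], s => by rw [tw.eq_1, tw_nil_left]
  | [], v, s => by rw [tw_nil_left, twL_single_nil_left, twL_single, one_mul, one_smul]
  | a :: u, b :: v, c :: s => by
    have hau : Finsupp.single (a :: u) (1 : k) = Finsupp.mapDomain (a :: ·) (Finsupp.single u 1) :=
      (Finsupp.mapDomain_single ..).symm
    have hcs : Finsupp.single (c :: s) (1 : k) = Finsupp.mapDomain (c :: ·) (Finsupp.single s 1) :=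
      (Finsupp.mapDomain_single ..).symm
    rw [tw.eq_3, tw.eq_3 k qc qs w b v c s, hau, hcs]
    simp only [map_add, map_smul, LinearMap.add_apply, LinearMap.smul_apply]
    rw [twL_mapDomain_cons qc qs w (tw_mem_homogeneous qc qs w hw _ _),
      twL_mapDomain_cons qc qs w (tw_mem_homogeneous qc qs w hw _ _),
      twL_mapDomain_cons qc qs w (tw_mem_homogeneous qc qs w hw _ _),
      twL_mapDomain_cons qc qs w (single_mem_homogeneous w u 1),
      twL_mapDomain_cons qc qs w (single_mem_homogeneous w u 1),
      twL_mapDomain_cons qc qs w (single_mem_homogeneous w u 1), ← hau, ← hcs,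
      twL_tw_single hw u (b :: v) (c :: s), twL_tw_single hw (a :: u) v (c :: s),
      twL_tw_single hw u v (c :: s), twL_tw_single hw u (b :: v) s,
      twL_tw_single hw (a :: u) v s, twL_tw_single hw u v s]
    have hc := congrArg (Finsupp.mapDomain (c :: ·)) (twL_tw_single hw (a :: u) (b :: v) s)
    rw [tw.eq_3] at hc
    rw [tw.eq_3 k qc qs w b v c s, mul_assoc a b c]
    simp only [map_add, map_smul, LinearMap.add_apply, LinearMap.smul_apply, Finsupp.mapDomain_add,
      Finsupp.mapDomain_smul, wl_cons, hw] at hc ⊢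
    -- the three terms beginning with `c` on the left all carry this power of `qc`
    linear_combination (norm := module) qc ^ ((w a + wl w u + w b + wl w v) * w c) • hc
termination_by u v s => u.length + v.length + s.length

theorem twL_assoc (hw : ∀ a b : A, w (a * b) = w a + w b) (x y z : List A →₀ k) :
    twL k qc qs w (twL k qc qs w x y) z = twL k qc qs w x (twL k qc qs w y z) := by
  have h : (twL k qc qs w).compr₂ (twL k qc qs w) =
      ((LinearMap.llcomp k _ _ _).comp (twL k qc qs w)).compl₂ (twL k qc qs w) := by
    ext u v s : 6
    simpa [twL_single] using twL_tw_single qc qs w hw u v s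
  exact congr($h x y z)

end Semigroup

end TwistedLaw

/-- ** Statement 15 **: for a semigroup `A` with additive weight `w`, the twisted law `↑`
is associative on `k⟨A*⟩`, the empty list is a two-sided unit for it, and it is graded:
`u ↑ v` is a linear combination of lists of weight `w u + w v`. -/
theorem twisted_law_assoc_unit_graded (A : Type*) [Semigroup A] (w : A → ℕ)
    (hw : ∀ a b : A, w (a * b) = w a + w b) (k : Type*) [CommRing k] (qc qs : k) :
    (∀ x y z : List A →₀ k,
        twL k qc qs w (twL k qc qs w x y) z = twL k qc qs w x (twL k qc qs w y z)) ∧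
    (∀ x : List A →₀ k,
        twL k qc qs w (Finsupp.single [] 1) x = x ∧ twL k qc qs w x (Finsupp.single [] 1) = x) ∧
    (∀ u v : List A, ∀ l ∈ (tw k qc qs w u v).support, wl w l = wl w u + wl w v) :=
  ⟨twL_assoc qc qs w hw,
   fun x => ⟨twL_single_nil_left qc qs w x, twL_single_nil_right qc qs w x⟩,
   fun u v => (Finsupp.mem_supported k _).1 (tw_mem_homogeneous qc qs w hw u v)⟩
end

section
/- For all admissible lists u and v of positive integers: the defining series of ζ(u) and ζ(v) are summable, every list occurring with nonzero coefficient in the stuffle product st(u,v) is admissible, and ζ(u) · ζ(v) = ζ̄(st(u,v)), where ζ̄ is the ℤ-linear extension of ζ to the free ℤ-module on admissible lists. -/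
/-- A list of positive integers is admissible when it is empty or its first entry is `≥ 2`
(entries are required to be positive). -/
def Adm (s : List ℕ) : Prop :=
  (∀ a ∈ s, 1 ≤ a) ∧ ∀ a : ℕ, s.head? = some a → 2 ≤ a

/-- The summand of the Euler–Zagier sum `ζ(s)`, indexed by strictly decreasing tuples
`n 0 > n 1 > ⋯ > n (k-1) ≥ 1` of positive integers: `∏ j, n j ^ (-s j)`. -/
noncomputable def zetaTerm (s : List ℕ)
    (n : {f : Fin s.length → ℕ // StrictAnti f ∧ ∀ j, 1 ≤ f j}) : ℝ :=
  ∏ j : Fin s.length, ((n.1 j : ℝ) ^ s.get j)⁻¹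

/-- The Euler–Zagier sum (multiple zeta value) of a list of positive integers. -/
noncomputable def zeta (s : List ℕ) : ℝ := ∑' n, zetaTerm s n

/-- The stuffle (quasi-shuffle) product of two lists of positive integers, with values in
the free `ℤ`-module on lists; this is the twisted law `↑` at `q_c = q_s = 1` for the
semigroup `(ℕ⁺, +)` with weight the identity. -/
noncomputable def st : List ℕ → List ℕ → (List ℕ →₀ ℤ)
  | u, [] => Finsupp.single u 1
  | [], b :: v => Finsupp.single (b :: v) 1
  | a :: u, b :: v =>
      Finsupp.mapDomain (a :: ·) (st u (b :: v))
        + Finsupp.mapDomain (b :: ·) (st (a :: u) v)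
        + Finsupp.mapDomain ((a + b) :: ·) (st u v)
  termination_by u v => u.length + v.length
  decreasing_by all_goals simp <;> omega

/-- The `ℤ`-linear extension of `ζ` to formal `ℤ`-combinations of lists. -/
noncomputable def zetaBar (x : List ℕ →₀ ℤ) : ℝ := x.sum fun l c => (c : ℝ) * zeta l

/-!
Both sides are limits of truncations. The truncated sums `ζₘ` satisfy
`ζₘ(a :: s) = ∑_{n ≤ m} n^(-a) ζ_{n-1}(s)`, and splitting the double sum for
`ζₘ(a :: u) ζₘ(b :: v)` according to whether the first index of `u` is larger than, smaller than
or equal to that of `v` reproduces the three terms of the stuffle recursion; hence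
`ζₘ(u) ζₘ(v) = ζ̄ₘ(st u v)` for every `m`. For admissible `s` the truncations are bounded by `2`,
because summing out the largest index with `∑_{n > p} n^(-a) ≤ p^(1-a)` gives
`ζₘ(a, b, …) ≤ ζₘ(a - 1 + b, …)`. So the series converge and one lets `m → ∞`.
-/

open Finset Filter Topology

theorem mem_support_st_cons_cons {a b : ℕ} {u v l : List ℕ}
    (hl : l ∈ (st (a :: u) (b :: v)).support) :
    (∃ l' ∈ (st u (b :: v)).support, a :: l' = l) ∨ (∃ l' ∈ (st (a :: u) v).support, b :: l' = l) ∨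
      ∃ l' ∈ (st u v).support, (a + b) :: l' = l := by
  classical
  rw [st.eq_3] at hl
  rcases Finset.mem_union.1 (Finsupp.support_add hl) with h | h
  · rcases Finset.mem_union.1 (Finsupp.support_add h) with h | h
    · exact Or.inl (Finset.mem_image.1 (Finsupp.mapDomain_support h))
    · exact Or.inr (Or.inl (Finset.mem_image.1 (Finsupp.mapDomain_support h)))
  · exact Or.inr (Or.inr (Finset.mem_image.1 (Finsupp.mapDomain_support h)))

theorem forall_mem_of_mem_support_st {P : ℕ → Prop} (hP : ∀ a b, P a → P b → P (a + b))
    {u v : List ℕ} (hu : ∀ a ∈ u, P a) (hv : ∀ b ∈ v, P b) :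
    ∀ l ∈ (st u v).support, ∀ c ∈ l, P c := by
  induction u, v using st.induct with
  | case1 u => simpa [st.eq_1] using hu
  | case2 b v => simpa [st.eq_2] using hv
  | case3 a u b v ih₁ ih₂ ih₃ =>
    intro l hl
    rw [List.forall_mem_cons] at hu hv
    rcases mem_support_st_cons_cons hl with ⟨l', hl', rfl⟩ | ⟨l', hl', rfl⟩ | ⟨l', hl', rfl⟩
    · exact List.forall_mem_cons.2 ⟨hu.1, ih₁ hu.2 (List.forall_mem_cons.2 hv) l' hl'⟩
    · exact List.forall_mem_cons.2 ⟨hv.1, ih₂ (List.forall_mem_cons.2 hu) hv.2 l' hl'⟩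
    · exact List.forall_mem_cons.2 ⟨hP _ _ hu.1 hv.1, ih₃ hu.2 hv.2 l' hl'⟩

theorem adm_of_mem_support_st {u v : List ℕ} (hu : Adm u) (hv : Adm v) :
    ∀ l ∈ (st u v).support, Adm l := by
  intro l hl
  refine ⟨forall_mem_of_mem_support_st (P := (1 ≤ ·)) (fun _ _ _ _ => by omega) hu.1 hv.1 l hl, ?_⟩
  rcases v with _ | ⟨b, v⟩
  · simp only [st.eq_1, Finsupp.mem_support_single] at hl
    exact hl.1 ▸ hu.2
  rcases u with _ | ⟨a, u⟩
  · simp only [st.eq_2, Finsupp.mem_support_single] at hl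
    exact hl.1 ▸ hv.2
  have ha := hu.2 a rfl
  have hb := hv.2 b rfl
  rcases mem_support_st_cons_cons hl with ⟨l', -, rfl⟩ | ⟨l', -, rfl⟩ | ⟨l', -, rfl⟩ <;>
    simp only [List.head?_cons, Option.some.injEq, forall_eq'] <;> omega

section IterSum

variable {R : Type*}

theorem sum_range_mul_sum_range [CommSemiring R] (x y : ℕ → R) (m : ℕ) :
    (∑ n ∈ range m, x n) * ∑ n ∈ range m, y n =
      ∑ n ∈ range m, x n * ∑ p ∈ range n, y p + ∑ n ∈ range m, (∑ p ∈ range n, x p) * y n +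
        ∑ n ∈ range m, x n * y n := by
  induction m with
  | zero => simp
  | succ m ih =>
    simp only [sum_range_succ]
    rw [add_mul, mul_add, mul_add, ih]
    ring

/-- `iterSum f s m = ∑_{m > n₁ > ⋯ > nₖ ≥ 0} ∏ⱼ f sⱼ nⱼ` for `s = [s₁, …, sₖ]`. -/
def iterSum [CommSemiring R] (f : ℕ → ℕ → R) : List ℕ → ℕ → R
  | [], _ => 1
  | a :: s, m => ∑ n ∈ range m, f a n * iterSum f s n

variable [CommRing R] (f : ℕ → ℕ → R)

theorem linearCombination_iterSum_mapDomain_cons (a m : ℕ) (x : List ℕ →₀ ℤ) :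
    Finsupp.linearCombination ℤ (iterSum f · m) (x.mapDomain (a :: ·)) =
      ∑ n ∈ range m, f a n * Finsupp.linearCombination ℤ (iterSum f · n) x := by
  rw [Finsupp.linearCombination_mapDomain]
  simp only [Finsupp.linearCombination_apply, Finsupp.sum, Function.comp_def, iterSum, smul_sum,
    mul_sum, mul_smul_comm]
  exact sum_comm

theorem iterSum_mul_iterSum (hf : ∀ a b n, f (a + b) n = f a n * f b n) (u v : List ℕ) (m : ℕ) :
    iterSum f u m * iterSum f v m = Finsupp.linearCombination ℤ (iterSum f · m) (st u v) := by
  induction u, v using st.induct generalizing m with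
  | case1 u => simp [st.eq_1, iterSum]
  | case2 b v => simp [st.eq_2, iterSum]
  | case3 a u b v ih₁ ih₂ ih₃ =>
    rw [st.eq_3, map_add, map_add, linearCombination_iterSum_mapDomain_cons,
      linearCombination_iterSum_mapDomain_cons, linearCombination_iterSum_mapDomain_cons]
    simp only [← ih₁, ← ih₂, ← ih₃, hf]
    conv_lhs => rw [iterSum, iterSum, sum_range_mul_sum_range]
    simp only [iterSum]
    congr 1
    congr 1
    all_goals exact sum_congr rfl fun n _ => by ring

end IterSum

/-- `ζₘ(s) = ∑_{m ≥ n₁ > ⋯ > nₖ ≥ 1} ∏ⱼ nⱼ^(-sⱼ)`, with `iterSum` running over the `nⱼ - 1`. -/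
noncomputable def zetaTrunc : List ℕ → ℕ → ℝ := iterSum fun a n => ((n + 1 : ℝ) ^ a)⁻¹

theorem zetaTrunc_nil (m : ℕ) : zetaTrunc [] m = 1 := rfl

theorem zetaTrunc_cons (a : ℕ) (s : List ℕ) (m : ℕ) :
    zetaTrunc (a :: s) m = ∑ n ∈ range m, ((n + 1 : ℝ) ^ a)⁻¹ * zetaTrunc s n := rfl

theorem zetaTrunc_mul_zetaTrunc (u v : List ℕ) (m : ℕ) :
    zetaTrunc u m * zetaTrunc v m = Finsupp.linearCombination ℤ (zetaTrunc · m) (st u v) :=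
  iterSum_mul_iterSum _ (fun a b n => by rw [pow_add, mul_inv]) u v m

theorem zetaTrunc_nonneg (s : List ℕ) (m : ℕ) : 0 ≤ zetaTrunc s m := by
  induction s generalizing m with
  | nil => exact zero_le_one
  | cons a s ih =>
    rw [zetaTrunc_cons]
    exact sum_nonneg fun n _ => mul_nonneg (by positivity) (ih n)

theorem sum_Ico_inv_pow_le {a : ℕ} (ha : 2 ≤ a) (p m : ℕ) :
    ∑ n ∈ Ico (p + 1) m, ((n + 1 : ℝ) ^ a)⁻¹ ≤ ((p + 1 : ℝ) ^ (a - 1))⁻¹ := by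
  rcases le_or_gt m (p + 1) with hm | hm
  · rw [Ico_eq_empty_of_le hm, sum_empty]
    positivity
  calc ∑ n ∈ Ico (p + 1) m, ((n + 1 : ℝ) ^ a)⁻¹
      ≤ ∑ n ∈ Ico (p + 1) m, ((p + 1 : ℝ) ^ (a - 2))⁻¹ * ((n + 1 : ℝ) ^ 2)⁻¹ := by
        refine sum_le_sum fun n hn => ?_
        have hpn : (p + 1 : ℝ) ≤ n + 1 := by
          have := (mem_Ico.1 hn).1
          exact_mod_cast (by omega : p + 1 ≤ n + 1)
        rw [← mul_inv]
        refine inv_anti₀ (by positivity) ?_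
        calc (p + 1 : ℝ) ^ (a - 2) * (n + 1) ^ 2 ≤ (n + 1 : ℝ) ^ (a - 2) * (n + 1) ^ 2 := by gcongr
          _ = (n + 1 : ℝ) ^ a := by rw [← pow_add, Nat.sub_add_cancel ha]
    _ = ((p + 1 : ℝ) ^ (a - 2))⁻¹ * ∑ i ∈ Ioc (p + 1) m, ((i : ℝ) ^ 2)⁻¹ := by
        rw [← mul_sum, ← Ico_add_one_add_one_eq_Ioc, ← sum_Ico_add']
        push_cast
        rfl
    _ ≤ ((p + 1 : ℝ) ^ (a - 2))⁻¹ * (p + 1 : ℝ)⁻¹ := by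
        gcongr
        refine (sum_Ioc_inv_sq_le_sub (by omega) hm.le).trans ?_
        push_cast
        have : (0 : ℝ) ≤ (m : ℝ)⁻¹ := by positivity
        linarith
    _ = ((p + 1 : ℝ) ^ (a - 1))⁻¹ := by
        rw [← mul_inv, ← pow_succ]
        congr 2
        omega

theorem zetaTrunc_cons_cons_le {a : ℕ} (ha : 2 ≤ a) (b : ℕ) (s : List ℕ) (m : ℕ) :
    zetaTrunc (a :: b :: s) m ≤ zetaTrunc ((a - 1 + b) :: s) m := by
  simp only [zetaTrunc_cons, mul_sum]
  rw [sum_comm' (t' := range m) (s' := fun p => Ico (p + 1) m) (by intro n p; simp; omega)]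
  refine sum_le_sum fun p _ => ?_
  rw [← sum_mul]
  calc (∑ n ∈ Ico (p + 1) m, ((n + 1 : ℝ) ^ a)⁻¹) * (((p + 1 : ℝ) ^ b)⁻¹ * zetaTrunc s p)
      ≤ ((p + 1 : ℝ) ^ (a - 1))⁻¹ * (((p + 1 : ℝ) ^ b)⁻¹ * zetaTrunc s p) := by
        gcongr
        · exact mul_nonneg (by positivity) (zetaTrunc_nonneg s p)
        · exact sum_Ico_inv_pow_le ha p m
    _ = ((p + 1 : ℝ) ^ (a - 1 + b))⁻¹ * zetaTrunc s p := by
        rw [pow_add, mul_inv, mul_assoc]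

theorem zetaTrunc_cons_le_two {a : ℕ} (ha : 2 ≤ a) {s : List ℕ} (hs : ∀ b ∈ s, 1 ≤ b) (m : ℕ) :
    zetaTrunc (a :: s) m ≤ 2 := by
  induction s generalizing a with
  | nil =>
    rcases Nat.eq_zero_or_pos m with rfl | hm
    · simp [zetaTrunc_cons]
    rw [zetaTrunc_cons, sum_range_eq_add_Ico _ hm]
    simp only [zetaTrunc_nil, mul_one, Nat.cast_zero, zero_add, one_pow, inv_one]
    have := sum_Ico_inv_pow_le ha 0 m
    simp only [Nat.cast_zero, zero_add, one_pow, inv_one] at this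
    linarith
  | cons b s ih =>
    rw [List.forall_mem_cons] at hs
    exact (zetaTrunc_cons_cons_le ha b s m).trans (ih (by omega) hs.2)

theorem zetaTrunc_le_two {s : List ℕ} (hs : Adm s) (m : ℕ) : zetaTrunc s m ≤ 2 := by
  rcases s with _ | ⟨a, s⟩
  · exact one_le_two
  · exact zetaTrunc_cons_le_two (hs.2 a rfl) (fun b hb => hs.1 b (List.mem_cons_of_mem a hb)) m

theorem Fin.strictAnti_cons {α : Type*} [Preorder α] {k : ℕ} {a : α} {f : Fin k → α} :
    StrictAnti (Fin.cons a f : Fin (k + 1) → α) ↔ (∀ j, f j < a) ∧ StrictAnti f :=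
  Fin.liftFun_cons (· > ·)

abbrev ZetaIndex (k : ℕ) : Type := {f : Fin k → ℕ // StrictAnti f ∧ ∀ j, 1 ≤ f j}

namespace ZetaIndex

open Classical in
noncomputable def atMost (k m : ℕ) : Finset (ZetaIndex k) :=
  (Fintype.piFinset fun _ => Icc 1 m).subtype _

theorem mem_atMost {k m : ℕ} {x : ZetaIndex k} : x ∈ atMost k m ↔ ∀ j, x.1 j ≤ m := by
  simp [atMost, Fintype.mem_piFinset, x.2.2]

theorem tendsto_atMost (k : ℕ) : Tendsto (atMost k) atTop atTop :=
  tendsto_atTop_finset_of_monotone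
    (fun _ _ h _ hx => mem_atMost.2 fun j => (mem_atMost.1 hx j).trans h)
    (fun x => ⟨univ.sup x.1, mem_atMost.2 fun j => le_sup (mem_univ j)⟩)

theorem sum_atMost_succ {M : Type*} [AddCommMonoid M] (k m : ℕ) (G : (Fin (k + 1) → ℕ) → M) :
    ∑ x ∈ atMost (k + 1) m, G x.1 =
      ∑ n ∈ range m, ∑ t ∈ atMost k n, G (Fin.cons (n + 1) t.1) := by
  simp only [atMost, sum_subtype_eq_sum_filter]
  rw [sum_congr rfl fun n _ => sum_subtype_eq_sum_filter (fun f => G (Fin.cons (n + 1) f)),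
    sum_sigma']
  refine sum_nbij' (fun f => ⟨f 0 - 1, Fin.tail f⟩) (fun p => Fin.cons (p.1 + 1) p.2)
    ?_ ?_ ?_ (fun _ _ => rfl) ?_
  · intro f hf
    obtain ⟨n, t, rfl⟩ : ∃ n t, (Fin.cons n t : Fin (k + 1) → ℕ) = f := ⟨_, _, Fin.cons_self_tail f⟩
    simp only [mem_filter, Fintype.mem_piFinset, mem_Icc, Fin.forall_fin_succ, Fin.cons_zero,
      Fin.cons_succ, Fin.strictAnti_cons, mem_sigma, mem_range, Fin.tail_cons] at hf ⊢
    obtain ⟨⟨⟨hn, hnm⟩, -⟩, ⟨hlt, hanti⟩, -, hpos⟩ := hf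
    exact ⟨by omega, fun j => ⟨hpos j, by have := hlt j; omega⟩, hanti, hpos⟩
  · rintro ⟨n, t⟩ h
    simp only [mem_filter, Fintype.mem_piFinset, mem_Icc, Fin.forall_fin_succ, Fin.cons_zero,
      Fin.cons_succ, Fin.strictAnti_cons, mem_sigma, mem_range] at h ⊢
    obtain ⟨hnm, hle, hanti, hpos⟩ := h
    have hlt (j : Fin k) : t j < n + 1 := Nat.lt_succ_of_le (hle j).2
    exact ⟨⟨⟨by omega, hnm⟩, fun j => ⟨hpos j, by have := hlt j; omega⟩⟩, ⟨hlt, hanti⟩,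
      by omega, hpos⟩
  all_goals
    intro f hf
    obtain ⟨n, t, rfl⟩ : ∃ n t, (Fin.cons n t : Fin (k + 1) → ℕ) = f := ⟨_, _, Fin.cons_self_tail f⟩
    simp only [mem_filter, Fintype.mem_piFinset, mem_Icc, Fin.forall_fin_succ, Fin.cons_zero] at hf
    simp [Nat.sub_add_cancel hf.1.1.1]

theorem sum_atMost_zetaTerm (s : List ℕ) (m : ℕ) :
    ∑ x ∈ atMost s.length m, zetaTerm s x = zetaTrunc s m := by
  induction s generalizing m with
  | nil => simp [atMost, zetaTerm, zetaTrunc_nil, Subsingleton.strictAnti]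
  | cons a s ih =>
    have key (n : ℕ) : ∑ t ∈ atMost s.length n,
        ∏ j, (((Fin.cons (n + 1) t.1 : Fin (s.length + 1) → ℕ) j : ℝ) ^ (a :: s).get j)⁻¹ =
          ((n + 1 : ℝ) ^ a)⁻¹ * zetaTrunc s n := by
      rw [← ih, mul_sum]
      refine sum_congr rfl fun t _ => ?_
      rw [Fin.prod_univ_succ]
      simp [zetaTerm]
    rw [zetaTrunc_cons, ← sum_congr rfl fun n _ => key n]
    exact sum_atMost_succ s.length m (fun f => ∏ j, ((f j : ℝ) ^ (a :: s).get j)⁻¹)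

end ZetaIndex

theorem zetaTerm_nonneg (s : List ℕ) : 0 ≤ zetaTerm s :=
  fun _ => prod_nonneg fun _ _ => by positivity

theorem summable_zetaTerm {s : List ℕ} (hs : Adm s) : Summable (zetaTerm s) := by
  refine summable_of_sum_le (c := 2) (zetaTerm_nonneg s) fun S => ?_
  obtain ⟨m, hm⟩ := ((ZetaIndex.tendsto_atMost s.length).eventually (eventually_ge_atTop S)).exists
  calc ∑ x ∈ S, zetaTerm s x ≤ ∑ x ∈ ZetaIndex.atMost s.length m, zetaTerm s x :=
        sum_le_sum_of_subset_of_nonneg hm fun x _ _ => zetaTerm_nonneg s x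
    _ = zetaTrunc s m := ZetaIndex.sum_atMost_zetaTerm s m
    _ ≤ 2 := zetaTrunc_le_two hs m

theorem tendsto_zetaTrunc {s : List ℕ} (hs : Adm s) :
    Tendsto (zetaTrunc s ·) atTop (𝓝 (zeta s)) := by
  have h := (summable_zetaTerm hs).hasSum.comp (ZetaIndex.tendsto_atMost s.length)
  simp only [Function.comp_def, ZetaIndex.sum_atMost_zetaTerm] at h
  exact h

theorem tendsto_linearCombination_zetaTrunc {x : List ℕ →₀ ℤ} (hx : ∀ l ∈ x.support, Adm l) :
    Tendsto (fun m => Finsupp.linearCombination ℤ (zetaTrunc · m) x) atTop (𝓝 (zetaBar x)) := by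
  simp only [Finsupp.linearCombination_apply, zetaBar, Finsupp.sum, ← zsmul_eq_mul]
  exact tendsto_finsetSum _ fun l hl => (tendsto_zetaTrunc (hx l hl)).const_smul _

/-- ** Statement 19 **: for admissible lists `u` and `v`, the defining series of `ζ(u)` and
`ζ(v)` are summable, the stuffle product `st u v` is supported on admissible lists, and
`ζ(u) ζ(v) = ζ̄(st u v)`. -/
theorem zeta_mul_eq_zetaBar_stuffle (u v : List ℕ) (hu : Adm u) (hv : Adm v) :
    Summable (zetaTerm u) ∧ Summable (zetaTerm v) ∧
    (∀ l ∈ (st u v).support, Adm l) ∧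
    zeta u * zeta v = zetaBar (st u v) := by
  have hst := adm_of_mem_support_st hu hv
  refine ⟨summable_zetaTerm hu, summable_zetaTerm hv, hst, ?_⟩
  have hprod := (tendsto_zetaTrunc hu).mul (tendsto_zetaTrunc hv)
  simp only [zetaTrunc_mul_zetaTrunc] at hprod
  exact tendsto_nhds_unique hprod (tendsto_linearCombination_zetaTrunc hst)
end
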